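/- Suppose G satisfies the doubled crystal axioms, with operators f_i, f_i'. Let w be a vertex such that f_i(w) and f_{i+1}(w) are defined, f_i'(w) is undefined, and Δ := (ε_i(w) - ε_i(f_{i+1}(w)), ε_{i+1}(w) - ε_{i+1}(f_i(w))) = (0,0). Then at least one of the following holds: (a) φ̂_i(f_{i+1}(w)) ≥ 2, or (b) ε̂_i(w) - ε̂_i(f_{i+1}(w)) = -1. (Hence at least one of the Octagon or Half-primed Octagon axioms applies at w.) -/

import Mathlib

/-- A "doubled crystal": a finite directed graph with vertices weighted by
`ℤ_{≥0}^n` and edges labeled `1', 1, …, (n-1)', n-1`, satisfying the axioms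
(B1)–(B3), (K), (A1)–(A8) and the dual axioms (A1*)–(A8*) of
Gillespie–Levinson's "Axioms for shifted tableau crystals".

`F i false` is the unprimed lowering operator `f_i`, `F i true` is the primed
lowering operator `f_i'`; similarly for the raising operators `E`.  The
statistics `eps, phi` are the total distances to the top and bottom of the
`{i,i'}`-string; `epsP, phiP` count only primed edges and `epsH, phiH`
count only unprimed edges. -/
structure DoubledCrystal (n : ℕ) where
  B : Type
  fintype : Fintype B
  F : Fin (n - 1) → Bool → B → Option B
  E : Fin (n - 1) → Bool → B → Option B
  wt : B → Fin n → ℕ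
  eps : Fin (n - 1) → B → ℕ
  phi : Fin (n - 1) → B → ℕ
  epsP : Fin (n - 1) → B → ℕ
  phiP : Fin (n - 1) → B → ℕ
  epsH : Fin (n - 1) → B → ℕ
  phiH : Fin (n - 1) → B → ℕ
  /-- `e_i, f_i` (and `e_i', f_i'`) are partial inverses. -/
  inverse : ∀ (i : Fin (n - 1)) (p : Bool) (x y : B),
    F i p x = some y ↔ E i p y = some x
  /-- (K1): effect of a raising operator on the weight. -/
  K1wt : ∀ (i : Fin (n - 1)) (p : Bool) (x y : B), E i p x = some y →
    ∀ j : Fin n, (wt y j : ℤ) = (wt x j : ℤ) +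
      (if (j : ℕ) = (i : ℕ) then 1 else if (j : ℕ) = (i : ℕ) + 1 then -1 else 0)
  /-- (K1): effect of a raising operator on the statistics `ε_i, φ_i`. -/
  K1len : ∀ (i : Fin (n - 1)) (p : Bool) (x y : B), E i p x = some y →
    eps i y + 1 = eps i x ∧ phi i y = phi i x + 1
  /-- (K2): `φ_i(x) - ε_i(x) = wt_i(x) - wt_{i+1}(x)`. -/
  K2 : ∀ (i : Fin (n - 1)) (x : B),
    (phi i x : ℤ) - (eps i x : ℤ) =
      (wt x ⟨(i : ℕ), by have := i.isLt; omega⟩ : ℤ) -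
      (wt x ⟨(i : ℕ) + 1, by have := i.isLt; omega⟩ : ℤ)
  /-- The unprimed/primed lowering operators are defined iff `φ̂_i`/`φ'_i` is positive. -/
  F_none : ∀ (i : Fin (n - 1)) (x : B),
    (F i false x = none ↔ phiH i x = 0) ∧ (F i true x = none ↔ phiP i x = 0)
  /-- The unprimed/primed raising operators are defined iff `ε̂_i`/`ε'_i` is positive. -/
  E_none : ∀ (i : Fin (n - 1)) (x : B),
    (E i false x = none ↔ epsH i x = 0) ∧ (E i true x = none ↔ epsP i x = 0)
  /-- Along an unprimed `i`-edge, the unprimed statistics shift by one. -/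
  Fstep : ∀ (i : Fin (n - 1)) (x y : B), F i false x = some y →
    epsH i y = epsH i x + 1 ∧ phiH i x = phiH i y + 1
  /-- Along a primed `i`-edge, the primed statistics shift by one. -/
  FstepP : ∀ (i : Fin (n - 1)) (x y : B), F i true x = some y →
    epsP i y = epsP i x + 1 ∧ phiP i x = phiP i y + 1
  /-- Along a strictly unprimed `i`-edge (separated string), the primed statistics
  do not change. -/
  Fsep : ∀ (i : Fin (n - 1)) (x y : B), F i false x = some y → F i true x ≠ some y →
    epsP i y = epsP i x ∧ phiP i y = phiP i x
  /-- Along a strictly primed `i`-edge (separated string), the unprimed statistics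
  do not change. -/
  FsepP : ∀ (i : Fin (n - 1)) (x y : B), F i true x = some y → F i false x ≠ some y →
    epsH i y = epsH i x ∧ phiH i y = phiH i x
  /-- (B1): every vertex lies either on a collapsed `{i,i'}`-string (all edges both
  primed and unprimed, all statistics equal, with top/bottom characterized by
  the vanishing of `wt_{i+1}`/`wt_i`), or on a separated string (total statistics
  split into primed and unprimed parts, with exactly one primed edge between
  the top and the bottom). -/
  B1 : ∀ (i : Fin (n - 1)) (v : B),
    (F i false v = F i true v ∧ E i false v = E i true v ∧
      epsP i v = eps i v ∧ epsH i v = eps i v ∧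
      phiP i v = phi i v ∧ phiH i v = phi i v ∧
      (eps i v = 0 ↔ wt v ⟨(i : ℕ) + 1, by have := i.isLt; omega⟩ = 0) ∧
      (phi i v = 0 ↔ wt v ⟨(i : ℕ), by have := i.isLt; omega⟩ = 0)) ∨
    (eps i v = epsP i v + epsH i v ∧ phi i v = phiP i v + phiH i v ∧
      epsP i v + phiP i v = 1)
  /-- (B1): if `wt_{i+1}(v) = 0` then `v` is the top of a collapsed `{i,i'}`-string. -/
  B1top : ∀ (i : Fin (n - 1)) (v : B),
    wt v ⟨(i : ℕ) + 1, by have := i.isLt; omega⟩ = 0 →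
      eps i v = 0 ∧ F i false v = F i true v
  /-- (B1): if `wt_i(v) = 0` then `v` is the bottom of a collapsed `{i,i'}`-string. -/
  B1bot : ∀ (i : Fin (n - 1)) (v : B),
    wt v ⟨(i : ℕ), by have := i.isLt; omega⟩ = 0 →
      phi i v = 0 ∧ E i false v = E i true v
  /-- (B2): distant edges commute (lowering). -/
  B2f : ∀ (i j : Fin (n - 1)) (p q : Bool) (w x y : B),
    ((i : ℕ) + 1 < (j : ℕ) ∨ (j : ℕ) + 1 < (i : ℕ)) →
    F i p w = some x → F j q w = some y →
    ∃ z, F j q x = some z ∧ F i p y = some z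
  /-- (B2): distant edges commute (raising). -/
  B2e : ∀ (i j : Fin (n - 1)) (p q : Bool) (w x y : B),
    ((i : ℕ) + 1 < (j : ℕ) ∨ (j : ℕ) + 1 < (i : ℕ)) →
    E i p w = some x → E j q w = some y →
    ∃ z, E j q x = some z ∧ E i p y = some z
  /-- (B3): the lengths axiom for an `(i±1)`- or `(i±1)'`-edge `z → w`. -/
  B3 : ∀ (i j : Fin (n - 1)) (p : Bool) (z w : B),
    ((i : ℕ) = (j : ℕ) + 1 ∨ (j : ℕ) = (i : ℕ) + 1) →
    F j p z = some w →
    (eps i w = eps i z ∧ phi i w = phi i z + 1) ∨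
    (eps i w + 1 = eps i z ∧ phi i w = phi i z)
  /-- (A1) Primed square. -/
  A1 : ∀ (i j : Fin (n - 1)) (w x y : B), (i : ℕ) + 1 = (j : ℕ) →
    F i true w = some x → F j true w = some y →
    ∃ z, F j true x = some z ∧ F i true y = some z
  /-- (A2) Half-solid square. -/
  A2 : ∀ (i j : Fin (n - 1)) (w x y : B), (i : ℕ) + 1 = (j : ℕ) →
    F i true w = some x → F j true w = some y →
    (((∃ z, F j false x = some z ∧ F i false y = some z) ∧
        F i true y ≠ F i false y) ↔
      (eps i w = eps i y ∧ eps j w = eps j x ∧ phi j w = 1 ∧ phiH j w = 0))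
  /-- (A3) Square for `{f_i', f_{i+1}}`. -/
  A3 : ∀ (i j : Fin (n - 1)) (w x y : B), (i : ℕ) + 1 = (j : ℕ) →
    F i true w = some x → F j false w = some y →
    (F j true w ≠ some y ∨ F i false w ≠ some x) →
    ∃ z, F j false x = some z ∧ F i true y = some z
  /-- (A4) Square for `{f_i, f_{i+1}'}`. -/
  A4 : ∀ (i j : Fin (n - 1)) (w x y : B), (i : ℕ) + 1 = (j : ℕ) →
    F i false w = some x → F j true w = some y →
    ((∃ z, F j true x = some z ∧ F i false y = some z) ↔ 0 < epsH i w)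
  /-- (A5) Half-primed square. -/
  A5 : ∀ (i j : Fin (n - 1)) (w x y : B), (i : ℕ) + 1 = (j : ℕ) →
    F i false w = some x → F j false w = some y → F i true w = none →
    ((∃ z, F j true x = some z ∧ F i true y = some z) ↔
      (eps i w = eps i y + 1 ∧ eps j w = eps j x + 1))
  /-- (A6) Square. -/
  A6 : ∀ (i j : Fin (n - 1)) (w x y : B), (i : ℕ) + 1 = (j : ℕ) →
    F i false w = some x → F j false w = some y → F i true w = none →
    ((∃ z, F j false x = some z ∧ F i false y = some z) ↔
      ((eps i w = eps i y + 1 ∧ eps j w = eps j x) ∨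
       (eps i w = eps i y ∧ eps j w = eps j x + 1)))
  /-- (A7) Half-primed octagon. -/
  A7 : ∀ (i j : Fin (n - 1)) (w x y : B), (i : ℕ) + 1 = (j : ℕ) →
    F i false w = some x → F j false w = some y → F i true w = none →
    (((∃ z, ((F i false y).bind (F i true)).bind (F j false) = some z ∧
            ((F j false x).bind (F j false)).bind (F i true) = some z) ∧
        F j false x ≠ F i false y) ↔
      (eps i w = eps i y ∧ eps j w = eps j x ∧ epsH i w + 1 = epsH i y))
  /-- (A8) Octagon. -/
  A8 : ∀ (i j : Fin (n - 1)) (w x y : B), (i : ℕ) + 1 = (j : ℕ) →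
    F i false w = some x → F j false w = some y → F i true w = none →
    (((∃ z, ((F i false y).bind (F i false)).bind (F j false) = some z ∧
            ((F j false x).bind (F j false)).bind (F i false) = some z) ∧
        F j false x ≠ F i false y) ↔
      (eps i w = eps i y ∧ eps j w = eps j x ∧ 2 ≤ phiH i y))
  /-- (A1*) Dual primed square. -/
  A1d : ∀ (i j : Fin (n - 1)) (w x y : B), (i : ℕ) + 1 = (j : ℕ) →
    E j true w = some x → E i true w = some y →
    ∃ z, E i true x = some z ∧ E j true y = some z
  /-- (A2*) Dual half-solid square. -/
  A2d : ∀ (i j : Fin (n - 1)) (w x y : B), (i : ℕ) + 1 = (j : ℕ) →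
    E j true w = some x → E i true w = some y →
    (((∃ z, E j false y = some z ∧ E i false x = some z) ∧
        E j true y ≠ E j false y) ↔
      (phi j w = phi j y ∧ phi i w = phi i x ∧ eps i w = 1 ∧ epsH i w = 0))
  /-- (A3*) Dual square for `{e_{i+1}', e_i}`. -/
  A3d : ∀ (i j : Fin (n - 1)) (w x y : B), (i : ℕ) + 1 = (j : ℕ) →
    E j true w = some x → E i false w = some y →
    (E i true w ≠ some y ∨ E j false w ≠ some x) →
    ∃ z, E i false x = some z ∧ E j true y = some z
  /-- (A4*) Dual square for `{e_{i+1}, e_i'}`. -/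
  A4d : ∀ (i j : Fin (n - 1)) (w x y : B), (i : ℕ) + 1 = (j : ℕ) →
    E j false w = some x → E i true w = some y →
    ((∃ z, E i true x = some z ∧ E j false y = some z) ↔ 0 < phiH j w)
  /-- (A5*) Dual half-primed square. -/
  A5d : ∀ (i j : Fin (n - 1)) (w x y : B), (i : ℕ) + 1 = (j : ℕ) →
    E j false w = some x → E i false w = some y → E j true w = none →
    ((∃ z, E j true y = some z ∧ E i true x = some z) ↔
      (phi j w = phi j y + 1 ∧ phi i w = phi i x + 1))
  /-- (A6*) Dual square. -/
  A6d : ∀ (i j : Fin (n - 1)) (w x y : B), (i : ℕ) + 1 = (j : ℕ) →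
    E j false w = some x → E i false w = some y → E j true w = none →
    ((∃ z, E j false y = some z ∧ E i false x = some z) ↔
      ((phi j w = phi j y + 1 ∧ phi i w = phi i x) ∨
       (phi j w = phi j y ∧ phi i w = phi i x + 1)))
  /-- (A7*) Dual half-primed octagon. -/
  A7d : ∀ (i j : Fin (n - 1)) (w x y : B), (i : ℕ) + 1 = (j : ℕ) →
    E j false w = some x → E i false w = some y → E j true w = none →
    (((∃ z, ((E j false y).bind (E j true)).bind (E i false) = some z ∧
            ((E i false x).bind (E i false)).bind (E j true) = some z) ∧
        E j false y ≠ E i false x) ↔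
      (phi j w = phi j y ∧ phi i w = phi i x ∧ phiH j w + 1 = phiH j y))
  /-- (A8*) Dual octagon. -/
  A8d : ∀ (i j : Fin (n - 1)) (w x y : B), (i : ℕ) + 1 = (j : ℕ) →
    E j false w = some x → E i false w = some y → E j true w = none →
    (((∃ z, ((E j false y).bind (E j false)).bind (E i false) = some z ∧
            ((E i false x).bind (E i false)).bind (E j false) = some z) ∧
        E j false y ≠ E i false x) ↔
      (phi j w = phi j y ∧ phi i w = phi i x ∧ 2 ≤ epsH j y))

namespace DoubledCrystal

variable {n : ℕ}

/-- One step along an `{i,i'}`-edge. -/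
def stringStep (C : DoubledCrystal n) (i : Fin (n - 1)) (x y : C.B) : Prop :=
  ∃ p, C.F i p x = some y

/-- `u` lies on the `{i,i'}`-string through `v`. -/
def SameString (C : DoubledCrystal n) (i : Fin (n - 1)) (v u : C.B) : Prop :=
  Relation.EqvGen (C.stringStep i) v u

/-- The `{i,i'}`-string through `v` is collapsed: every unprimed edge on it
coincides with the corresponding primed edge. -/
def Collapsed (C : DoubledCrystal n) (i : Fin (n - 1)) (v : C.B) : Prop :=
  ∀ u, C.SameString i v u → C.F i false u = C.F i true u

/-- One step along any edge of the graph. -/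
def step (C : DoubledCrystal n) (x y : C.B) : Prop :=
  ∃ i p, C.F i p x = some y

end DoubledCrystal

/-- **Some octagon axiom always applies** (Proposition 3.2 of the paper).
Let `w` be a vertex of a doubled crystal with `f_i(w)` and `f_{i+1}(w)`
defined, `f_i'(w)` undefined, and
`Δ = (ε_i(w) - ε_i(f_{i+1}(w)), ε_{i+1}(w) - ε_{i+1}(f_i(w))) = (0,0)`.
Then either `φ̂_i(f_{i+1}(w)) ≥ 2` (so the Octagon axiom (A8) applies at `w`)
or `ε̂_i(w) - ε̂_i(f_{i+1}(w)) = -1` (so the Half-primed Octagon axiom (A7)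
applies at `w`). -/
theorem doubledCrystal_some_octagon_applies {n : ℕ} (C : DoubledCrystal n)
    (i j : Fin (n - 1)) (hij : (i : ℕ) + 1 = (j : ℕ)) (w x y : C.B)
    (hx : C.F i false w = some x) (hy : C.F j false w = some y)
    (hnp : C.F i true w = none)
    (hΔ1 : C.eps i w = C.eps i y) (hΔ2 : C.eps j w = C.eps j x) :
    2 ≤ C.phiH i y ∨ C.epsH i w + 1 = C.epsH i y := by
  -- w's i-string is separated
  have hw : C.eps i w = C.epsP i w + C.epsH i w ∧
      C.phi i w = C.phiP i w + C.phiH i w ∧ C.epsP i w + C.phiP i w = 1 := by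
    rcases C.B1 i w with h | h
    · exfalso; rw [h.1, hnp] at hx; exact nomatch hx
    · exact h
  have hwP : C.phiP i w = 0 := (C.F_none i w).2.mp hnp
  have hwH : C.phiH i w ≠ 0 := by
    intro h0
    rw [← (C.F_none i w).1] at h0
    rw [h0] at hx; exact nomatch hx
  have hwE : C.epsP i w = 1 := by omega
  -- B3 along the j-edge w → y
  have hB3 := C.B3 i j false w y (Or.inr hij.symm) hy
  have hphiy : C.phi i y = C.phi i w + 1 := by
    rcases hB3 with h | h
    · exact h.2
    · omega
  rcases C.B1 i y with h | h
  · -- collapsed: φ̂_i(y) = φ_i(y) ≥ 2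
    left
    have := h.2.2.2.2.2.1
    omega
  · -- separated
    obtain ⟨he, hp, hone⟩ := h
    rcases Nat.eq_zero_or_pos (C.epsP i y) with h0 | h1
    · right
      have : C.epsP i y = 0 := h0
      omega
    · left
      have : C.epsP i y = 1 := by omega
      have hpp : C.phiP i y = 0 := by omega
      omega
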